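/- arXiv:0901.1838 — 3 statements merged into one kernel-verified Lean document; each statement's English description precedes it below -/
import Mathlib

section
/- Let E be an elliptic curve and suppose f = α⊗1 + β⊗δ ∈ End⁰(E)⊗F (δ² = -N) satisfies f^†f ∈ Q^× (i.e., f preserves the weak polarization). If α and β are both nonzero, then f = φ⊗z for some φ ∈ End⁰(E) and z ∈ F. Consequently, the group of F-linear quasi-isogenies of E⊗O_F preserving the weak polarization λ_I is {α⊗z : α ∈ (End⁰(E))^×, z ∈ F^×}. -/
open scoped TensorProduct

/-!
Write `f = α ⊗ 1 + β ⊗ δ`. Since `σ δ = -δ`, the `δ`-component of `f^† f` is `α^∨ β - β^∨ α`, so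
`f^† f ∈ ℚ` makes `α^∨ β` symmetric, hence a rational scalar `s`. If `α ≠ 0`, then `α^∨ α = q ∈ ℚ^×`,
so `q⁻¹ α^∨` is a two-sided inverse of `α` and `β = (s / q) α`, i.e. `f = α ⊗ (1 + (s / q) δ)`; if
`α = 0`, then `f = β ⊗ δ`. Every nonzero element of `End⁰(E)` is a unit, which gives the
description of the group.
-/

section TensorPair

variable {R S M : Type*} [CommRing R] [AddCommGroup M] [Module R M]

lemma tmul_add_tmul_injective [Ring S] [Algebra R S] [Module.Flat R S] {x y : M}
    (hxy : LinearIndependent R ![x, y]) {a b a' b' : S}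
    (h : a ⊗ₜ[R] x + b ⊗ₜ[R] y = a' ⊗ₜ[R] x + b' ⊗ₜ[R] y) : a = a' ∧ b = b' := by
  have hS : LinearIndependent S ![(1 : S) ⊗ₜ[R] x, 1 ⊗ₜ[R] y] := by
    convert Module.Flat.linearIndependent_one_tmul (S := S) hxy using 1
    ext i; fin_cases i <;> rfl
  have := LinearIndependent.pair_iff.mp hS (a - a') (b - b') (by
    simp only [TensorProduct.smul_tmul', smul_eq_mul, mul_one, TensorProduct.sub_tmul]
    rw [← sub_eq_zero] at h
    rw [← h]; abel)
  simpa [sub_eq_zero] using this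

lemma exists_eq_tmul_add_tmul [AddCommGroup S] [Module R S] {x y : M}
    (hxy : ∀ m : M, ∃ r s : R, m = r • x + s • y) (t : S ⊗[R] M) :
    ∃ a b : S, t = a ⊗ₜ[R] x + b ⊗ₜ[R] y := by
  induction t using TensorProduct.induction_on with
  | zero => exact ⟨0, 0, by simp⟩
  | tmul a m =>
    obtain ⟨r, s, rfl⟩ := hxy m
    exact ⟨r • a, s • a, by simp only [TensorProduct.tmul_add, TensorProduct.smul_tmul]⟩
  | add t u ht hu =>
    obtain ⟨a, b, rfl⟩ := ht
    obtain ⟨c, d, rfl⟩ := hu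
    exact ⟨a + c, b + d, by simp only [TensorProduct.add_tmul]; abel⟩

end TensorPair

lemma linearIndependent_one_of_sq_eq_algebraMap {F : Type*} [Ring F] [Nontrivial F] [Algebra ℚ F]
    {δ : F} {d : ℚ} (hd : d < 0) (hδ : δ ^ 2 = algebraMap ℚ F d) :
    LinearIndependent ℚ ![1, δ] := by
  refine (LinearIndependent.pair_iff' one_ne_zero).mpr fun c hc => ?_
  rw [← Algebra.algebraMap_eq_smul_one] at hc
  rw [← hc, ← map_pow] at hδ
  nlinarith [(algebraMap ℚ F).injective hδ, sq_nonneg c]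

/-- Abstracts the Rosati involution `α ↦ α^∨` of `End⁰(E)`; that its symmetric elements are
rational scalars is the property special to elliptic curves. -/
structure IsScalarInvolution {A : Type*} [Ring A] [Algebra ℚ A] (v : A →+ A) : Prop where
  map_mul_rev : ∀ a b : A, v (a * b) = v b * v a
  involutive : ∀ a : A, v (v a) = a
  exists_eq_algebraMap_of_fixed : ∀ a : A, v a = a → ∃ r : ℚ, a = algebraMap ℚ A r

namespace IsScalarInvolution

variable {A : Type*} [Ring A] [Algebra ℚ A] {v : A →+ A}

lemma exists_fixed_mul_eq (hv : IsScalarInvolution v) {a b : A} (h : v a * b = v b * a) :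
    ∃ r : ℚ, v a * b = algebraMap ℚ A r :=
  hv.exists_eq_algebraMap_of_fixed _ (by rw [hv.map_mul_rev, hv.involutive, h])

lemma exists_smul_mul_eq_one [NoZeroDivisors A] (hv : IsScalarInvolution v) {a : A} (ha : a ≠ 0) :
    ∃ q : ℚ, q • v a * a = 1 := by
  obtain ⟨r, hr⟩ := hv.exists_fixed_mul_eq (a := a) rfl
  have hva : v a ≠ 0 := fun h => ha (by rw [← hv.involutive a, h, map_zero])
  have hr0 : r ≠ 0 := by
    rintro rfl
    exact mul_ne_zero hva ha (by rw [hr, map_zero])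
  refine ⟨r⁻¹, ?_⟩
  rw [smul_mul_assoc, hr, Algebra.smul_def, ← map_mul, inv_mul_cancel₀ hr0, map_one]

lemma isUnit_of_ne_zero [NoZeroDivisors A] (hv : IsScalarInvolution v) {a : A} (ha : a ≠ 0) :
    IsUnit a := by
  obtain ⟨q, hq⟩ := hv.exists_smul_mul_eq_one ha
  exact .of_mul_eq_one_right _ hq

lemma exists_eq_smul_of_mul_comm [NoZeroDivisors A] (hv : IsScalarInvolution v) {a b : A}
    (ha : a ≠ 0) (h : v a * b = v b * a) : ∃ c : ℚ, b = c • a := by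
  obtain ⟨q, hq⟩ := hv.exists_smul_mul_eq_one ha
  obtain ⟨r, hr⟩ := hv.exists_fixed_mul_eq h
  refine ⟨q * r, ?_⟩
  calc b = a * (q • v a) * b := by rw [mul_eq_one_comm.mp hq, one_mul]
    _ = (q * r) • a := by
      rw [mul_assoc, smul_mul_assoc, hr, Algebra.algebraMap_eq_smul_one, smul_smul,
        mul_smul_comm, mul_one]

end IsScalarInvolution

section WeakPolarization

variable {A F : Type*} [Ring A] [Algebra ℚ A] [CommRing F] [Algebra ℚ F]
  {v : A →+ A} {σ : F ≃ₐ[ℚ] F} {dag : A ⊗[ℚ] F →+ A ⊗[ℚ] F} {δ : F} {d : ℚ}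

lemma dag_mul_self_eq (hdag : ∀ (a : A) (z : F), dag (a ⊗ₜ[ℚ] z) = v a ⊗ₜ[ℚ] σ z)
    (hσ : σ δ = -δ) (hδ : δ ^ 2 = algebraMap ℚ F d) (α β : A) :
    dag (α ⊗ₜ[ℚ] 1 + β ⊗ₜ[ℚ] δ) * (α ⊗ₜ[ℚ] 1 + β ⊗ₜ[ℚ] δ) =
      (v α * α - d • (v β * β)) ⊗ₜ[ℚ] 1 + (v α * β - v β * α) ⊗ₜ[ℚ] δ := by
  have hδδ : -δ * δ = (-d) • (1 : F) := by
    rw [neg_mul, ← sq, hδ, Algebra.algebraMap_eq_smul_one, neg_smul]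
  rw [map_add, hdag, hdag, map_one, hσ]
  simp only [add_mul, mul_add, Algebra.TensorProduct.tmul_mul_tmul, mul_one, one_mul, hδδ,
    ← TensorProduct.smul_tmul]
  rw [TensorProduct.tmul_neg, neg_smul, TensorProduct.neg_tmul, TensorProduct.sub_tmul,
    TensorProduct.sub_tmul]
  abel

lemma mul_comm_of_dag_mul_self_eq_algebraMap
    (hdag : ∀ (a : A) (z : F), dag (a ⊗ₜ[ℚ] z) = v a ⊗ₜ[ℚ] σ z)
    (hσ : σ δ = -δ) (hδ : δ ^ 2 = algebraMap ℚ F d) (hli : LinearIndependent ℚ ![1, δ])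
    {α β : A} {r : ℚ}
    (h : dag (α ⊗ₜ[ℚ] 1 + β ⊗ₜ[ℚ] δ) * (α ⊗ₜ[ℚ] 1 + β ⊗ₜ[ℚ] δ) = algebraMap ℚ (A ⊗[ℚ] F) r) :
    v α * β = v β * α := by
  rw [dag_mul_self_eq hdag hσ hδ, Algebra.TensorProduct.algebraMap_apply,
    ← add_zero (algebraMap ℚ A r ⊗ₜ[ℚ] (1 : F)), ← TensorProduct.zero_tmul A δ] at h
  exact sub_eq_zero.mp (tmul_add_tmul_injective hli h).2

lemma IsScalarInvolution.exists_eq_tmul_of_mul_comm [NoZeroDivisors A]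
    (hv : IsScalarInvolution v) (hli : LinearIndependent ℚ ![1, δ]) {α β : A}
    (h : v α * β = v β * α) : ∃ (a : A) (z : F), z ≠ 0 ∧ α ⊗ₜ[ℚ] 1 + β ⊗ₜ[ℚ] δ = a ⊗ₜ[ℚ] z := by
  rcases eq_or_ne α 0 with rfl | hα
  · exact ⟨β, δ, by simpa using hli.ne_zero 1, by rw [TensorProduct.zero_tmul, zero_add]⟩
  · obtain ⟨c, rfl⟩ := hv.exists_eq_smul_of_mul_comm hα h
    refine ⟨α, 1 + c • δ, fun h0 => ?_, by rw [TensorProduct.tmul_add, TensorProduct.smul_tmul]⟩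
    exact one_ne_zero (LinearIndependent.pair_iff.mp hli 1 c (by rwa [one_smul])).1

lemma IsScalarInvolution.isUnit_of_isUnit_tmul [NoZeroDivisors A] [Nontrivial F]
    (hv : IsScalarInvolution v) {a : A} {z : F} (h : IsUnit (a ⊗ₜ[ℚ] z)) : IsUnit a := by
  rcases eq_or_ne a 0 with rfl | ha
  · rw [TensorProduct.zero_tmul, isUnit_zero_iff] at h
    rw [isUnit_zero_iff]
    exact Algebra.TensorProduct.includeLeft_injective (S := ℚ) (algebraMap ℚ F).injective
      (by rw [map_zero, map_one]; exact h)
  · exact hv.isUnit_of_ne_zero ha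

end WeakPolarization

theorem stmt14_general {A F : Type*} [Ring A] [Algebra ℚ A] [NoZeroDivisors A]
    [Field F] [Algebra ℚ F]
    (N : ℕ) (hNpos : 0 < N)
    (δ : F) (hδ : δ ^ 2 = -(N : F))
    (hbasis : ∀ x : F, ∃ a b : ℚ, x = algebraMap ℚ F a + algebraMap ℚ F b * δ)
    (σ : F ≃ₐ[ℚ] F) (hσ : σ δ = -δ)
    (v : A →+ A)
    (hanti : ∀ a b : A, v (a * b) = v b * v a)
    (hinv : ∀ a : A, v (v a) = a)
    (hfix : ∀ a : A, v a = a → ∃ r : ℚ, a = algebraMap ℚ A r)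
    (dag : A ⊗[ℚ] F →+ A ⊗[ℚ] F)
    (hdag : ∀ (a : A) (z : F), dag (a ⊗ₜ[ℚ] z) = v a ⊗ₜ[ℚ] σ z) :
    (∀ α β : A, α ≠ 0 → β ≠ 0 →
      (∃ r : ℚ, r ≠ 0 ∧
        dag (α ⊗ₜ[ℚ] 1 + β ⊗ₜ[ℚ] δ) * (α ⊗ₜ[ℚ] 1 + β ⊗ₜ[ℚ] δ)
          = algebraMap ℚ (A ⊗[ℚ] F) r) →
      ∃ (φ : A) (z : F), α ⊗ₜ[ℚ] (1 : F) + β ⊗ₜ[ℚ] δ = φ ⊗ₜ[ℚ] z) ∧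
    (∀ g : A ⊗[ℚ] F, IsUnit g →
      (∃ r : ℚ, r ≠ 0 ∧ dag g * g = algebraMap ℚ (A ⊗[ℚ] F) r) →
      ∃ (a : A) (z : F), IsUnit a ∧ z ≠ 0 ∧ g = a ⊗ₜ[ℚ] z) := by
  have hv : IsScalarInvolution v := ⟨hanti, hinv, hfix⟩
  have hδ' : δ ^ 2 = algebraMap ℚ F (-N) := by rw [hδ, map_neg, map_natCast]
  have hli : LinearIndependent ℚ ![1, δ] :=
    linearIndependent_one_of_sq_eq_algebraMap (by simpa using hNpos) hδ'
  have hpure (α β : A) (hf : ∃ r : ℚ, r ≠ 0 ∧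
      dag (α ⊗ₜ[ℚ] 1 + β ⊗ₜ[ℚ] δ) * (α ⊗ₜ[ℚ] 1 + β ⊗ₜ[ℚ] δ) = algebraMap ℚ (A ⊗[ℚ] F) r) :
      ∃ (a : A) (z : F), z ≠ 0 ∧ α ⊗ₜ[ℚ] 1 + β ⊗ₜ[ℚ] δ = a ⊗ₜ[ℚ] z :=
    let ⟨_, _, hr⟩ := hf
    hv.exists_eq_tmul_of_mul_comm hli (mul_comm_of_dag_mul_self_eq_algebraMap hdag hσ hδ' hli hr)
  have hspan (x : F) : ∃ a b : ℚ, x = a • 1 + b • δ := by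
    obtain ⟨a, b, rfl⟩ := hbasis x
    exact ⟨a, b, by rw [Algebra.smul_def, Algebra.smul_def, mul_one]⟩
  refine ⟨fun α β _ _ hf => ?_, fun g hg hf => ?_⟩
  · obtain ⟨a, z, -, h⟩ := hpure α β hf
    exact ⟨a, z, h⟩
  · obtain ⟨α, β, rfl⟩ := exists_eq_tmul_add_tmul hspan g
    obtain ⟨a, z, hz, h⟩ := hpure α β hf
    exact ⟨a, z, hv.isUnit_of_isUnit_tmul (h ▸ hg), hz, h⟩

/-- If `f = α⊗1 + β⊗δ ∈ End⁰(E) ⊗_ℚ F` (with `F = ℚ(δ)`, `δ² = -N`) satisfies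
`f^†f ∈ ℚ^×` (it preserves the weak polarization) and `α, β` are both nonzero, then
`f = φ⊗z` is a pure tensor.  Consequently, the group of `F`-linear quasi-isogenies of
`E ⊗ O_F` preserving the weak polarization `λ_I` is `{α⊗z : α ∈ End⁰(E)^×, z ∈ F^×}`. -/
theorem stmt14 {A F : Type*} [Ring A] [Algebra ℚ A] [NoZeroDivisors A]
    [Field F] [Algebra ℚ F]
    (N : ℕ) (hNpos : 0 < N) (hNsf : Squarefree N)
    (δ : F) (hδ : δ ^ 2 = -(N : F))
    (hbasis : ∀ x : F, ∃ a b : ℚ, x = algebraMap ℚ F a + algebraMap ℚ F b * δ)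
    (σ : F ≃ₐ[ℚ] F) (hσ : σ δ = -δ)
    (v : A →+ A)
    (hanti : ∀ a b : A, v (a * b) = v b * v a)
    (hinv : ∀ a : A, v (v a) = a)
    (hdeg : ∀ a : A, ∃ r : ℚ, v a * a = algebraMap ℚ A r)
    (hfix : ∀ a : A, v a = a → ∃ r : ℚ, a = algebraMap ℚ A r)
    (dag : A ⊗[ℚ] F →+ A ⊗[ℚ] F)
    (hdag : ∀ (a : A) (z : F), dag (a ⊗ₜ[ℚ] z) = v a ⊗ₜ[ℚ] σ z) :
    (∀ α β : A, α ≠ 0 → β ≠ 0 →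
      (∃ r : ℚ, r ≠ 0 ∧
        dag (α ⊗ₜ[ℚ] 1 + β ⊗ₜ[ℚ] δ) * (α ⊗ₜ[ℚ] 1 + β ⊗ₜ[ℚ] δ)
          = algebraMap ℚ (A ⊗[ℚ] F) r) →
      ∃ (φ : A) (z : F), α ⊗ₜ[ℚ] (1 : F) + β ⊗ₜ[ℚ] δ = φ ⊗ₜ[ℚ] z) ∧
    (∀ g : A ⊗[ℚ] F, IsUnit g →
      (∃ r : ℚ, r ≠ 0 ∧ dag g * g = algebraMap ℚ (A ⊗[ℚ] F) r) →
      ∃ (a : A) (z : F), IsUnit a ∧ z ≠ 0 ∧ g = a ⊗ₜ[ℚ] z) :=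
  stmt14_general N hNpos δ hδ hbasis σ hσ v hanti hinv hfix dag hdag
end

section
/- Let R = Z[1/6][q₂, r₄, (q₂⁴ - r₄²)^{-1}] with the involution w fixing q₂ and negating r₄. The subring of w-invariant elements is generated by q₂, D = q₂⁴ - r₄², and D^{-1}; i.e., R^w = Z[1/6][q₂, D^{±1}]. -/
/-!
Every element of `R` can be written as `a + r₄ b` with `a, b` in `A = k[q₂, D, D⁻¹]`,
because `R` is generated over `A` by `r₄` and `r₄² = q₂⁴ - D ∈ A`. The involution fixes `A`
pointwise and sends `a + r₄ b` to `a - r₄ b`, so an invariant element satisfies `2 r₄ b = 0`,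
hence `r₄ b = 0` since `2` is invertible, and lies in `A`.
-/

theorem Subalgebra.exists_eq_add_mul_of_mem_adjoin_insert {k R : Type*} [CommSemiring k]
    [CommSemiring R] [Algebra k R] (A : Subalgebra k R) {r : R}
    (hr : r * r ∈ A) {x : R} (hx : x ∈ Algebra.adjoin k (insert r (A : Set R))) :
    ∃ a ∈ A, ∃ b ∈ A, x = a + r * b := by
  induction hx using Algebra.adjoin_induction with
  | mem y hy =>
    rcases hy with rfl | hy
    · exact ⟨0, zero_mem A, 1, one_mem A, by ring⟩
    · exact ⟨y, hy, 0, zero_mem A, by ring⟩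
  | algebraMap c => exact ⟨algebraMap k R c, algebraMap_mem A c, 0, zero_mem A, by ring⟩
  | add y z _ _ ihy ihz =>
    obtain ⟨a₁, ha₁, b₁, hb₁, rfl⟩ := ihy
    obtain ⟨a₂, ha₂, b₂, hb₂, rfl⟩ := ihz
    exact ⟨a₁ + a₂, add_mem ha₁ ha₂, b₁ + b₂, add_mem hb₁ hb₂, by ring⟩
  | mul y z _ _ ihy ihz =>
    obtain ⟨a₁, ha₁, b₁, hb₁, rfl⟩ := ihy
    obtain ⟨a₂, ha₂, b₂, hb₂, rfl⟩ := ihz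
    exact ⟨a₁ * a₂ + r * r * (b₁ * b₂),
      add_mem (mul_mem ha₁ ha₂) (mul_mem hr (mul_mem hb₁ hb₂)),
      a₁ * b₂ + b₁ * a₂, add_mem (mul_mem ha₁ hb₂) (mul_mem hb₁ ha₂), by ring⟩

theorem AlgHom.apply_eq_self_iff_mem_of_adjoin_insert_eq_top {k R : Type*} [CommSemiring k]
    [CommRing R] [Algebra k R] (w : R →ₐ[k] R)
    {A : Subalgebra k R} (hA : A ≤ AlgHom.equalizer w (AlgHom.id k R)) {r : R}
    (hr : r * r ∈ A) (hwr : w r = -r) (h2 : IsUnit (2 : R))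
    (htop : Algebra.adjoin k (insert r (A : Set R)) = ⊤) (x : R) :
    w x = x ↔ x ∈ A := by
  refine ⟨fun hwx => ?_, fun hx => hA hx⟩
  have hx : x ∈ Algebra.adjoin k (insert r (A : Set R)) := htop ▸ Algebra.mem_top
  obtain ⟨a, ha, b, hb, rfl⟩ := A.exists_eq_add_mul_of_mem_adjoin_insert hr hx
  have hwa : w a = a := hA ha
  have hwb : w b = b := hA hb
  have hrb : 2 * (r * b) = 2 * 0 := by
    rw [map_add, map_mul, hwa, hwb, hwr] at hwx
    linear_combination -hwx
  rw [h2.mul_left_cancel hrb, add_zero]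
  exact ha

theorem AlgHom.apply_eq_self_of_mul_eq_one {k R : Type*} [CommSemiring k] [CommSemiring R]
    [Algebra k R] (w : R →ₐ[k] R) {u v : R} (huv : u * v = 1) (hwu : w u = u) : w v = v := by
  have hwuv : u * w v = 1 := by rw [← hwu, ← map_mul, huv, map_one]
  exact (IsUnit.of_mul_eq_one v huv).mul_left_cancel (hwuv.trans huv.symm)

theorem stmt16_general {k R : Type*} [CommRing k] [CommRing R] [Algebra k R]
    (h6 : IsUnit (6 : k))
    (q2 r4 Dinv : R)
    (hDinv : (q2 ^ 4 - r4 ^ 2) * Dinv = 1)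
    (hgen : Algebra.adjoin k {q2, r4, Dinv} = ⊤)
    (w : R →ₐ[k] R) (hw2 : w q2 = q2) (hw4 : w r4 = -r4) :
    ∀ x : R, w x = x ↔ x ∈ Algebra.adjoin k {q2, q2 ^ 4 - r4 ^ 2, Dinv} := by
  set D := q2 ^ 4 - r4 ^ 2 with hD
  have hwD : w D = D := by rw [hD, map_sub, map_pow, map_pow, hw2, hw4, neg_sq]
  have hfixed : Algebra.adjoin k {q2, D, Dinv} ≤ AlgHom.equalizer w (AlgHom.id k R) := by
    refine AlgHom.adjoin_le_equalizer _ _ ?_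
    rintro y (rfl | rfl | rfl)
    exacts [hw2, hwD, w.apply_eq_self_of_mul_eq_one hDinv hwD]
  have hr4sq : r4 * r4 ∈ Algebra.adjoin k {q2, D, Dinv} := by
    rw [show r4 * r4 = q2 ^ 4 - D by rw [hD]; ring]
    exact sub_mem (pow_mem (Algebra.subset_adjoin (by simp)) 4) (Algebra.subset_adjoin (by simp))
  have h2 : IsUnit (2 : R) := by
    have h2k : IsUnit (2 : k) :=
      isUnit_of_mul_isUnit_left (show IsUnit ((2 : k) * 3) by norm_num [h6])
    simpa only [map_ofNat] using h2k.map (algebraMap k R)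
  have htop : Algebra.adjoin k (insert r4 (Algebra.adjoin k {q2, D, Dinv} : Set R)) = ⊤ := by
    rw [Algebra.adjoin_insert_adjoin, eq_top_iff, ← hgen]
    exact Algebra.adjoin_mono (by intro y; simp only [Set.mem_insert_iff]; tauto)
  exact w.apply_eq_self_iff_mem_of_adjoin_insert_eq_top hfixed hr4sq hw4 h2 htop

/-- Let `R = k[q₂, r₄][D⁻¹]` (with `6` invertible in `k`) be the localization of a
polynomial ring in two variables at `D = q₂⁴ - r₄²`, and let `w` be the involution fixing
`q₂` and negating `r₄`.  Then the subring of `w`-invariant elements is generated by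
`q₂`, `D` and `D⁻¹`: `R^w = k[q₂, D^{±1}]`. -/
theorem stmt16 {k R : Type*} [CommRing k] [CommRing R] [Algebra k R]
    (h6 : IsUnit (6 : k))
    (q2 r4 Dinv : R)
    (hind : AlgebraicIndependent k ![q2, r4])
    (hDinv : (q2 ^ 4 - r4 ^ 2) * Dinv = 1)
    (hgen : Algebra.adjoin k {q2, r4, Dinv} = ⊤)
    (w : R →ₐ[k] R) (hw2 : w q2 = q2) (hw4 : w r4 = -r4) :
    ∀ x : R, w x = x ↔ x ∈ Algebra.adjoin k {q2, q2 ^ 4 - r4 ^ 2, Dinv} :=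
  stmt16_general h6 q2 r4 Dinv hDinv hgen w hw2 hw4
end

section
/- In the graded ring Z[1/6][a₁², a₁a₃, a₃², Δ^{-1}] ⊂ Z[1/6][a₁, a₃, Δ^{-1}] with Δ = a₁³a₃³ - 27a₃⁴, the involution w given by w(a₁²) = a₁², w(a₁a₃) = (1/27)a₁⁴ - a₁a₃, w(a₃²) = (1/27²)a₁⁶ - (2/27)a₁³a₃ + a₃² satisfies w² = id, and with d₂ = 54(a₃/a₁) - a₁² (an element of the ring Z[1/6][a₁^{±1}, a₃]) one has Δ·w(Δ) = (1/(2⁸·3¹⁸))·(a₁⁶ - a₁²d₂²)⁴. -/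
open MvPolynomial

noncomputable section

/-- The ambient field `ℚ(a₁, a₃)` containing `ℤ[1/6][a₁^{±1}, a₃, Δ⁻¹]`. -/
abbrev K3 := FractionRing (MvPolynomial (Fin 2) ℚ)

/-- The level-3 modular form `a₁`. -/
def a1 : K3 := algebraMap (MvPolynomial (Fin 2) ℚ) K3 (X 0)

/-- The level-3 modular form `a₃`. -/
def a3 : K3 := algebraMap (MvPolynomial (Fin 2) ℚ) K3 (X 1)

/-- The discriminant `Δ = a₁³a₃³ - 27a₃⁴`. -/
def Δ3 : K3 := a1 ^ 3 * a3 ^ 3 - 27 * a3 ^ 4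

/-- `d₂ = 54(a₃/a₁) - a₁²`. -/
def d2 : K3 := 54 * (a3 / a1) - a1 ^ 2

/-!
Write `Δ = a₃³(a₁³ - 27a₃)`. Since `w` fixes `a₁` and sends `a₁³ - 27a₃` to `27a₃`, one gets
`w(Δ) = a₃(a₁³ - 27a₃)³/27²`, so `Δ·w(Δ) = (a₃(a₁³ - 27a₃))⁴/27²`. On the other side
`a₁⁶ - a₁²d₂² = a₁²(a₁² - d₂)(a₁² + d₂) = 108a₃(a₁³ - 27a₃)`, and `108⁴·27² = 2⁸·3¹⁸`.
-/

section Involution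

variable {K : Type*} [Field K] (w : K →+* K) {a b : K}
  (hwa : w a = a) (hwb : w b = (27 : K)⁻¹ * a ^ 3 - b)

include hwa hwb

theorem map_map_eq_self_of_map_eq : w (w b) = b := by
  rw [hwb, map_sub, map_mul, map_pow, hwa, hwb, map_inv₀, map_ofNat]
  ring

theorem map_discriminant_eq [CharZero K] :
    w (a ^ 3 * b ^ 3 - 27 * b ^ 4) = (27 ^ 2 : K)⁻¹ * b * (a ^ 3 - 27 * b) ^ 3 := by
  simp only [map_sub, map_mul, map_pow, map_ofNat, hwa, hwb]
  field_simp
  ring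

end Involution

theorem pow_six_sub_mul_sq_eq {K : Type*} [Field K] {a : K} (b : K) (ha : a ≠ 0) :
    a ^ 6 - a ^ 2 * (54 * (b / a) - a ^ 2) ^ 2 = 108 * b * (a ^ 3 - 27 * b) := by
  field_simp
  ring

theorem a1_ne_zero : a1 ≠ 0 :=
  (map_ne_zero_iff _ (IsFractionRing.injective (MvPolynomial (Fin 2) ℚ) K3)).2 (X_ne_zero 0)

/-- In `ℤ[1/6][a₁², a₁a₃, a₃², Δ⁻¹]` with `Δ = a₁³a₃³ - 27a₃⁴`, the involution `w`
(induced by `a₁ ↦ a₁`, `a₃ ↦ (1/27)a₁³ - a₃`) satisfies `w(a₁²) = a₁²`,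
`w(a₁a₃) = (1/27)a₁⁴ - a₁a₃`, `w(a₃²) = (1/27²)a₁⁶ - (2/27)a₁³a₃ + a₃²`, `w² = id`, and
with `d₂ = 54(a₃/a₁) - a₁²` one has `Δ·w(Δ) = (1/(2⁸·3¹⁸))(a₁⁶ - a₁²d₂²)⁴`. -/
theorem stmt17 (w : K3 →+* K3) (hw1 : w a1 = a1)
    (hw3 : w a3 = (27 : K3)⁻¹ * a1 ^ 3 - a3) :
    w (a1 ^ 2) = a1 ^ 2 ∧
    w (a1 * a3) = (27 : K3)⁻¹ * a1 ^ 4 - a1 * a3 ∧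
    w (a3 ^ 2) = (27 ^ 2 : K3)⁻¹ * a1 ^ 6 - (2 : K3) / 27 * (a1 ^ 3 * a3) + a3 ^ 2 ∧
    w (w a1) = a1 ∧ w (w a3) = a3 ∧
    Δ3 * w Δ3 = (2 ^ 8 * 3 ^ 18 : K3)⁻¹ * (a1 ^ 6 - a1 ^ 2 * d2 ^ 2) ^ 4 := by
  refine ⟨by rw [map_pow, hw1], by rw [map_mul, hw1, hw3]; ring, by rw [map_pow, hw3]; ring,
    by rw [hw1, hw1], map_map_eq_self_of_map_eq w hw1 hw3, ?_⟩
  rw [Δ3, map_discriminant_eq w hw1 hw3, d2, pow_six_sub_mul_sq_eq a3 a1_ne_zero]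
  ring

end
end
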